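/- Let M be a commutative monoid which is not a group, and let a be a non-invertible element of M. Let M/∼_m be the quotient M-set of M obtained by identifying all non-invertible elements to a single point. Then (M/∼_m) ⊗_M M_a is a one-element set (the trivial M_a-set), while M/∼_m is not a one-element set. Consequently, the family of localizations at non-invertible elements does not reflect isomorphisms of M-sets. -/

import Mathlib

open Relation

section
variable {M N : Type} [CommMonoid M] [CommMonoid N]

/-- Generating relation for `T ⊗_M N` along `φ : M →* N`: `(m • t, n) ∼ (t, φ(m) n)`. -/
inductive TensorRel (φ : M →* N) (T : Type) [MulAction M T] : T × N → T × N → Prop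
  | mk (m : M) (t : T) (n : N) : TensorRel φ T (m • t, n) (t, φ m * n)

/-- The base change `T ⊗_M N` of the `M`-set `T` along `φ : M →* N`. -/
abbrev MTensor (φ : M →* N) (T : Type) [MulAction M T] : Type :=
  Quotient (EqvGen.setoid (TensorRel φ T))

/-- The map `T ⊗_M N → U ⊗_M N` induced by a map of `M`-sets `f : T → U`. -/
def MTensor.map (φ : M →* N) {T U : Type} [MulAction M T] [MulAction M U]
    (f : T →[M] U) : MTensor φ T → MTensor φ U :=
  Quotient.lift (fun p => Quotient.mk (EqvGen.setoid (TensorRel φ U)) (f p.1, p.2)) (by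
    intro a b h
    induction h with
    | rel x y hxy =>
      obtain ⟨m, t, n⟩ := hxy
      refine Quotient.sound ?_
      show EqvGen (TensorRel φ U) (f (m • t), n) (f t, φ m * n)
      rw [map_smul]
      exact EqvGen.rel _ _ (TensorRel.mk m (f t) n)
    | refl x => rfl
    | symm x y _ ih => exact ih.symm
    | trans x y z _ _ ih₁ ih₂ => exact ih₁.trans ih₂)

end

section
variable (M : Type) [CommMonoid M]

/-- The equivalence relation on `M` identifying all non-invertible elements
(the elements of the maximal ideal `M \ M^×`). -/
def nonunitSetoid : Setoid M where
  r x y := x = y ∨ (¬ IsUnit x ∧ ¬ IsUnit y)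
  iseqv := by
    constructor
    · exact fun x => Or.inl rfl
    · rintro x y (rfl | ⟨h1, h2⟩)
      · exact Or.inl rfl
      · exact Or.inr ⟨h2, h1⟩
    · rintro x y z (rfl | ⟨h1, h2⟩) (rfl | ⟨h3, h4⟩)
      · exact Or.inl rfl
      · exact Or.inr ⟨h3, h4⟩
      · exact Or.inr ⟨h1, h2⟩
      · exact Or.inr ⟨h1, h4⟩

/-- The quotient `M`-set `M/∼ₘ` of `M` identifying all non-invertible elements. -/
def NonunitQuot : Type := Quotient (nonunitSetoid M)

/-- `M/∼ₘ` is an `M`-set. -/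
instance : MulAction M (NonunitQuot M) where
  smul m := Quotient.map (fun x => m * x) (by
    rintro x y (rfl | ⟨hx, hy⟩)
    · exact Or.inl rfl
    · exact Or.inr ⟨fun h => hx (isUnit_of_mul_isUnit_right h),
        fun h => hy (isUnit_of_mul_isUnit_right h)⟩)
  one_smul := by
    rintro ⟨x⟩
    exact congrArg (Quotient.mk _) (one_mul x)
  mul_smul a b := by
    rintro ⟨x⟩
    exact congrArg (Quotient.mk _) (mul_assoc a b x)

/-- The unique map of `M`-sets from `M/∼ₘ` to the one-point `M`-set. -/
def termHom : NonunitQuot M →[M] PUnit :=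
  ⟨fun _ => PUnit.unit, fun _ _ => rfl⟩

/-- The canonical map `M → M_b` to the localization at an element `b`. -/
noncomputable def toAway (b : M) : M →* Localization (Submonoid.powers b) :=
  (Localization.monoidOf (Submonoid.powers b)).toMonoidHom

end

/-! In `M_a` every element is a fraction `r/s` with `a ∣ r` and `a ∣ s`, and all multiples of the
non-unit `a` act on the class of `1` in `M/∼ₘ` in the same way, sending it to the class of the
non-units. Hence `⟦1⟧ ⊗ r/s = ⟦1⟧ ⊗ s/s = ⟦1⟧ ⊗ 1`, and since `⟦1⟧` generates `M/∼ₘ`, every element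
of `(M/∼ₘ) ⊗_M M_a` equals `⟦1⟧ ⊗ 1`. Meanwhile `⟦1⟧ ≠ ⟦a⟧` in `M/∼ₘ`. -/

namespace MTensor

variable {M N : Type} [CommMonoid M] [CommMonoid N] {φ : M →* N} {T : Type} [MulAction M T]

theorem mk_smul (m : M) (t : T) (n : N) :
    (Quotient.mk _ (m • t, n) : MTensor φ T) = Quotient.mk _ (t, φ m * n) :=
  Quotient.sound (EqvGen.rel _ _ (TensorRel.mk m t n))

theorem mk_mul_eq_of_smul_eq {u v : M} {t : T} (h : u • t = v • t) (n : N) :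
    (Quotient.mk _ (t, φ u * n) : MTensor φ T) = Quotient.mk _ (t, φ v * n) := by
  rw [← mk_smul, h, mk_smul]

end MTensor

section Away

variable {M : Type} [CommMonoid M]

theorem toAway_apply (b r : M) : toAway M b r = Localization.mk r 1 :=
  (Localization.mk_one_eq_monoidOf_mk r).symm

theorem toAway_mul_mk_one (b r : M) (s : Submonoid.powers b) :
    toAway M b r * Localization.mk 1 s = Localization.mk r s := by
  rw [toAway_apply, Localization.mk_mul, mul_one, one_mul]

theorem Localization.exists_mk_eq_of_dvd_of_dvd (b : M) (y : Localization (Submonoid.powers b)) :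
    ∃ (r : M) (s : Submonoid.powers b), b ∣ r ∧ b ∣ (s : M) ∧ y = Localization.mk r s := by
  induction y using Localization.ind with
  | H y =>
    obtain ⟨r, s⟩ := y
    let b' : Submonoid.powers b := ⟨b, Submonoid.mem_powers b⟩
    refine ⟨r * b, s * b', dvd_mul_left b r, dvd_mul_left b (s : M), ?_⟩
    rw [← Localization.mk_mul, Localization.mk_self b', mul_one]

/-- Write `y = r • (1/s)` and `1 = s • (1/s)` with `b ∣ r, s`; then `r` and `s` can be moved
across the tensor sign onto `t`, where they act alike. -/
theorem MTensor.mk_toAway_eq_mk_one {b : M} {T : Type} [MulAction M T] {t : T}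
    (h : ∀ r s : M, b ∣ r → b ∣ s → r • t = s • t) (y : Localization (Submonoid.powers b)) :
    (Quotient.mk _ (t, y) : MTensor (toAway M b) T) = Quotient.mk _ (t, 1) := by
  obtain ⟨r, s, hr, hs, rfl⟩ := Localization.exists_mk_eq_of_dvd_of_dvd b y
  rw [← toAway_mul_mk_one, MTensor.mk_mul_eq_of_smul_eq (h r s hr hs), toAway_mul_mk_one,
    Localization.mk_self]

theorem MTensor.subsingleton_toAway {b : M} {T : Type} [MulAction M T] (t₀ : T)
    (hgen : ∀ t : T, ∃ m : M, m • t₀ = t) (h : ∀ r s : M, b ∣ r → b ∣ s → r • t₀ = s • t₀) :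
    Subsingleton (MTensor (toAway M b) T) := by
  suffices key : ∀ z : MTensor (toAway M b) T, z = Quotient.mk _ (t₀, 1) from
    ⟨fun z z' => (key z).trans (key z').symm⟩
  rintro ⟨t, y⟩
  obtain ⟨m, rfl⟩ := hgen t
  exact (MTensor.mk_smul m t₀ y).trans (MTensor.mk_toAway_eq_mk_one h _)

instance MTensor.subsingleton_toAway_punit (b : M) : Subsingleton (MTensor (toAway M b) PUnit) :=
  MTensor.subsingleton_toAway PUnit.unit (fun _ => ⟨1, rfl⟩) fun _ _ _ _ => rfl

end Away

namespace NonunitQuot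

variable {M : Type} [CommMonoid M]

def mk (m : M) : NonunitQuot M := Quotient.mk _ m

theorem smul_mk_one (m : M) : m • mk (1 : M) = mk m :=
  congrArg (Quotient.mk _) (mul_one m)

theorem mk_eq_mk_of_not_isUnit {m n : M} (hm : ¬ IsUnit m) (hn : ¬ IsUnit n) : mk m = mk n :=
  Quotient.sound (Or.inr ⟨hm, hn⟩)

theorem mk_one_ne {m : M} (hm : ¬ IsUnit m) : mk (1 : M) ≠ mk m := by
  intro h
  rcases Quotient.exact h with h | ⟨h, -⟩
  · exact hm (h ▸ isUnit_one)
  · exact h isUnit_one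

theorem subsingleton_tensor_toAway {b : M} (hb : ¬ IsUnit b) :
    Subsingleton (MTensor (toAway M b) (NonunitQuot M)) := by
  refine MTensor.subsingleton_toAway (mk 1) (Quotient.ind fun m => ⟨m, smul_mk_one m⟩)
    fun r s hr hs => ?_
  rw [smul_mk_one, smul_mk_one]
  exact mk_eq_mk_of_not_isUnit (not_isUnit_of_not_isUnit_dvd hb hr)
    (not_isUnit_of_not_isUnit_dvd hb hs)

end NonunitQuot

theorem quotient_tensor_localization_trivial_general (M : Type) [CommMonoid M]
    (a : M) (ha : ¬ IsUnit a) :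
    (Nonempty (MTensor (toAway M a) (NonunitQuot M)) ∧
      Subsingleton (MTensor (toAway M a) (NonunitQuot M))) ∧
    (∃ x y : NonunitQuot M, x ≠ y) ∧
    (¬ Function.Bijective (termHom M)) ∧
    (∀ b : M, ¬ IsUnit b →
      Function.Bijective (MTensor.map (toAway M b) (termHom M))) := by
  have hne := NonunitQuot.mk_one_ne ha
  refine ⟨⟨⟨Quotient.mk _ (NonunitQuot.mk 1, 1)⟩, NonunitQuot.subsingleton_tensor_toAway ha⟩,
    ⟨_, _, hne⟩, fun h => hne (h.injective (Subsingleton.elim _ _)), fun b hb => ?_⟩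
  have := NonunitQuot.subsingleton_tensor_toAway hb
  exact ⟨fun _ _ _ => Subsingleton.elim _ _,
    fun _ => ⟨Quotient.mk _ (NonunitQuot.mk 1, 1), Subsingleton.elim _ _⟩⟩

/-- If `M` is not a group and `a ∈ M` is non-invertible, then `(M/∼ₘ) ⊗_M M_a` is a
one-element set while `M/∼ₘ` is not; consequently the family of localizations of `M` at
its non-invertible elements does not reflect isomorphisms of `M`-sets: the map
`M/∼ₘ → {*}` is not bijective, yet all its base changes to the `M_b` (`b` non-invertible)
are bijective. -/
theorem quotient_tensor_localization_trivial (M : Type) [CommMonoid M]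
    (hng : ¬ ∀ m : M, IsUnit m) (a : M) (ha : ¬ IsUnit a) :
    (Nonempty (MTensor (toAway M a) (NonunitQuot M)) ∧
      Subsingleton (MTensor (toAway M a) (NonunitQuot M))) ∧
    (∃ x y : NonunitQuot M, x ≠ y) ∧
    (¬ Function.Bijective (termHom M)) ∧
    (∀ b : M, ¬ IsUnit b →
      Function.Bijective (MTensor.map (toAway M b) (termHom M))) :=
  quotient_tensor_localization_trivial_general M a ha
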